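/- arXiv:1202.6545 — 2 statements merged into one kernel-verified Lean document; each statement's English description precedes it below -/
import Mathlib

section
/- In a hidden Markov tree model, the state subtree rooted at a non-root vertex u is, conditionally on the observations, independent of the states outside this subtree given the parent state, and depends only on the observations within the subtree: whenever P(S̄_{0∖u} = s̄_{0∖u}, X = x) > 0 and P(S_{ρ(u)} = s_{ρ(u)}, X̄_u = x̄_u) > 0, one has P(S̄_u = s̄_u | S̄_{0∖u} = s̄_{0∖u}, X = x) = P(S̄_u = s̄_u | S_{ρ(u)} = s_{ρ(u)}, X̄_u = x̄_u). -/
/-- A hidden Markov tree (HMT) model on a finite rooted tree with `n` vertices: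
the root is `0` and the vertices are indexed in a topological order, i.e. every
non-root vertex has a parent with strictly smaller index.  The model has `J`
states and observation alphabet `{0, …, V-1}`, with initial probabilities (for
the root), transition probabilities and emission probabilities. -/
structure HMTModel (J V n : ℕ) [NeZero n] where
  parent : Fin n → Fin n
  parent_lt : ∀ u : Fin n, u ≠ 0 → parent u < u
  init : Fin J → ℝ
  trans : Fin J → Fin J → ℝ
  emit : Fin J → Fin V → ℝ
  init_nonneg : ∀ j, 0 ≤ init j
  init_sum : ∑ j, init j = 1
  trans_nonneg : ∀ i j, 0 ≤ trans i j
  trans_sum : ∀ i, ∑ j, trans i j = 1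
  emit_nonneg : ∀ j y, 0 ≤ emit j y
  emit_sum : ∀ j, ∑ y, emit j y = 1

namespace HMTModel

variable {J V n : ℕ} [NeZero J] [NeZero n]

/-- The joint law of the state tree and the observed tree:
`P(S = s, X = x) = π_{s_0} (∏_{u ≠ 0} p_{s_{ρ(u)} s_u}) ∏_u b_{s_u}(x_u)`. -/
noncomputable def joint (M : HMTModel J V n) (s : Fin n → Fin J) (x : Fin n → Fin V) : ℝ :=
  M.init (s 0) *
    (∏ u ∈ Finset.univ.filter (fun u : Fin n => u ≠ 0), M.trans (s (M.parent u)) (s u)) *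
    ∏ u : Fin n, M.emit (s u) (x u)

open Classical in
/-- Probability of an event on (state tree, observed tree). -/
noncomputable def pr (M : HMTModel J V n)
    (E : (Fin n → Fin J) → (Fin n → Fin V) → Prop) : ℝ :=
  ∑ s : Fin n → Fin J, ∑ y : Fin n → Fin V, if E s y then M.joint s y else 0

/-- Conditional probability `P(A | B)`; it is `0` when the conditioning event
has probability zero. -/
noncomputable def cpr (M : HMTModel J V n)
    (A B : (Fin n → Fin J) → (Fin n → Fin V) → Prop) : ℝ :=
  if 0 < M.pr B then M.pr (fun s y => A s y ∧ B s y) / M.pr B else 0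

/-- Entropy of the random vector `f(S)` given the event `E`
(natural logarithm, with the convention `0 log 0 = 0`). -/
noncomputable def condEnt (M : HMTModel J V n) {α : Type*} [Fintype α]
    (f : (Fin n → Fin J) → α)
    (E : (Fin n → Fin J) → (Fin n → Fin V) → Prop) : ℝ :=
  -∑ a : α, M.cpr (fun s _ => f s = a) E * Real.log (M.cpr (fun s _ => f s = a) E)

/-- Entropy of `f(S)` given the random vector `g(S)` and the event `E`:
`H(f(S) | g(S), E) = ∑_c P(g(S) = c | E) H(f(S) | g(S) = c, E)`. -/
noncomputable def condEntGiven (M : HMTModel J V n) {α β : Type*} [Fintype α] [Fintype β]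
    (f : (Fin n → Fin J) → α) (g : (Fin n → Fin J) → β)
    (E : (Fin n → Fin J) → (Fin n → Fin V) → Prop) : ℝ :=
  ∑ c : β, M.cpr (fun s _ => g s = c) E * M.condEnt f (fun s y => g s = c ∧ E s y)

/-- The event `X = x`. -/
def obsEq (x : Fin n → Fin V) : (Fin n → Fin J) → (Fin n → Fin V) → Prop :=
  fun _ y => y = x

/-- `v` belongs to the complete subtree rooted at `u` (i.e. `u` is obtained
from `v` by repeatedly taking parents). -/
def inSubtree (M : HMTModel J V n) (u v : Fin n) : Prop :=
  Relation.ReflTransGen (fun a b : Fin n => a ≠ 0 ∧ M.parent a = b) v u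

open Classical in
/-- The state subtree `S̄_u` rooted at `u` (coordinates outside the subtree
are padded by `0`). -/
noncomputable def subVar (M : HMTModel J V n) (u : Fin n) (s : Fin n → Fin J) :
    Fin n → Fin J :=
  fun v => if M.inSubtree u v then s v else 0

open Classical in
/-- The collection `S̄_{c(u)}` of state subtrees rooted at the children of `u`
(all other coordinates padded by `0`). -/
noncomputable def childSubVar (M : HMTModel J V n) (u : Fin n) (s : Fin n → Fin J) :
    Fin n → Fin J :=
  fun v => if M.inSubtree u v ∧ v ≠ u then s v else 0

/-- The states `S_{c(u)}` of the children of `u` (all other coordinates padded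
by `0`). -/
def childVar (M : HMTModel J V n) (u : Fin n) (s : Fin n → Fin J) :
    Fin n → Fin J :=
  fun v => if v ≠ 0 ∧ M.parent v = u then s v else 0

/-- The states `(S_v)_{v ∈ Vs}` of a subset `Vs` of vertices (all other
coordinates padded by `0`). -/
def memVar (_M : HMTModel J V n) (Vs : Finset (Fin n)) (s : Fin n → Fin J) :
    Fin n → Fin J :=
  fun v => if v ∈ Vs then s v else 0

end HMTModel

open HMTModel


section Aux

namespace HMTModel

variable {J V n : ℕ} [NeZero J] [NeZero n]

lemma inSubtree_le (M : HMTModel J V n) {u v : Fin n} (h : M.inSubtree u v) : u ≤ v := by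
  induction h with
  | refl => exact le_refl _
  | tail _ hstep ih =>
      rename_i b c _
      have hc : c ≤ b := by
        rw [← hstep.2]; exact (M.parent_lt b hstep.1).le
      exact le_trans hc ih

lemma inSubtree_ne_zero (M : HMTModel J V n) {u v : Fin n} (hu : u ≠ 0)
    (h : M.inSubtree u v) : v ≠ 0 := by
  rcases Relation.ReflTransGen.cases_head h with h | ⟨c, hr, _⟩
  · exact h ▸ hu
  · exact hr.1

lemma not_inSubtree_parent (M : HMTModel J V n) {u : Fin n} (hu : u ≠ 0) :
    ¬ M.inSubtree u (M.parent u) := fun h =>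
  absurd (M.inSubtree_le h) (not_le.mpr (M.parent_lt u hu))

lemma inSubtree_parent_of_ne (M : HMTModel J V n) {u v : Fin n}
    (h : M.inSubtree u v) (hvu : v ≠ u) : v ≠ 0 ∧ M.inSubtree u (M.parent v) := by
  rcases Relation.ReflTransGen.cases_head h with h | ⟨c, hr, hc⟩
  · exact absurd h hvu
  · exact ⟨hr.1, hr.2 ▸ hc⟩

lemma inSubtree_of_parent (M : HMTModel J V n) {u v : Fin n}
    (hv : v ≠ 0) (h : M.inSubtree u (M.parent v)) : M.inSubtree u v :=
  Relation.ReflTransGen.head ⟨hv, rfl⟩ h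

open Classical in
/-- Patch two state assignments along the subtree rooted at `u`. -/
noncomputable def patchS (M : HMTModel J V n) (u : Fin n) (a b : Fin n → Fin J) :
    Fin n → Fin J :=
  fun v => if M.inSubtree u v then a v else b v

open Classical in
lemma patchS_mem {M : HMTModel J V n} {u v : Fin n} (a b : Fin n → Fin J)
    (h : M.inSubtree u v) : M.patchS u a b v = a v := by
  simp [patchS, h]

open Classical in
lemma patchS_not_mem {M : HMTModel J V n} {u v : Fin n} (a b : Fin n → Fin J)
    (h : ¬ M.inSubtree u v) : M.patchS u a b v = b v := by
  simp [patchS, h]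

lemma joint_mul_joint (M : HMTModel J V n) (a b : Fin n → Fin J)
    (x y : Fin n → Fin V) :
    M.joint a x * M.joint b y =
      (M.init (a 0) * M.init (b 0)) *
        (∏ v ∈ Finset.univ.filter (fun v : Fin n => v ≠ 0),
          M.trans (a (M.parent v)) (a v) * M.trans (b (M.parent v)) (b v)) *
        ∏ v : Fin n, M.emit (a v) (x v) * M.emit (b v) (y v) := by
  unfold joint
  rw [Finset.prod_mul_distrib, Finset.prod_mul_distrib]
  ring

/-- The key swap identity for the joint law. -/
lemma joint_swap (M : HMTModel J V n) {u : Fin n} (hu : u ≠ 0)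
    (a b : Fin n → Fin J) (x y : Fin n → Fin V)
    (hab : a (M.parent u) = b (M.parent u))
    (hxy : ∀ v, M.inSubtree u v → x v = y v) :
    M.joint a x * M.joint b y =
      M.joint (M.patchS u b a) x * M.joint (M.patchS u a b) y := by
  classical
  rw [M.joint_mul_joint a b, M.joint_mul_joint (M.patchS u b a) (M.patchS u a b)]
  have h0 : ¬ M.inSubtree u 0 := fun h => (M.inSubtree_ne_zero hu h) rfl
  congr 1
  · congr 1
    · rw [patchS_not_mem _ _ h0, patchS_not_mem _ _ h0]
    · refine Finset.prod_congr rfl (fun v hv => ?_)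
      have hv0 : v ≠ 0 := (Finset.mem_filter.mp hv).2
      by_cases hT : M.inSubtree u v
      · by_cases hvu : v = u
        · subst hvu
          have hp : ¬ M.inSubtree v (M.parent v) := M.not_inSubtree_parent hu
          rw [patchS_mem _ _ hT, patchS_mem _ _ hT,
            patchS_not_mem _ _ hp, patchS_not_mem _ _ hp, hab]
          ring
        · have hp : M.inSubtree u (M.parent v) :=
            (M.inSubtree_parent_of_ne hT hvu).2
          rw [patchS_mem _ _ hT, patchS_mem _ _ hT,
            patchS_mem _ _ hp, patchS_mem _ _ hp]
          ring
      · have hp : ¬ M.inSubtree u (M.parent v) := fun h =>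
          hT (M.inSubtree_of_parent hv0 h)
        rw [patchS_not_mem _ _ hT, patchS_not_mem _ _ hT,
          patchS_not_mem _ _ hp, patchS_not_mem _ _ hp]
  · refine Finset.prod_congr rfl (fun v _ => ?_)
    by_cases hT : M.inSubtree u v
    · rw [patchS_mem _ _ hT, patchS_mem _ _ hT, hxy v hT]
      ring
    · rw [patchS_not_mem _ _ hT, patchS_not_mem _ _ hT]

end HMTModel

end Aux

/-- In a hidden Markov tree model, the state subtree rooted at a
non-root vertex `u` is, conditionally on the observations, independent of the states
outside this subtree given the parent state, and depends only on the observations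
within the subtree: whenever `P(S̄_{0∖u} = σ̄_{0∖u}, X = x) > 0` and
`P(S_{ρ(u)} = σ_{ρ(u)}, X̄_u = x̄_u) > 0`, one has
`P(S̄_u = σ̄_u | S̄_{0∖u} = σ̄_{0∖u}, X = x)
   = P(S̄_u = σ̄_u | S_{ρ(u)} = σ_{ρ(u)}, X̄_u = x̄_u)`. -/
theorem hmt_subtree_conditional_independence
    {J V n : ℕ} [NeZero J] [NeZero n] (M : HMTModel J V n)
    (u : Fin n) (hu : u ≠ 0) (σ : Fin n → Fin J) (x : Fin n → Fin V)
    (h1 : 0 < M.pr (fun s y => (∀ v : Fin n, ¬ M.inSubtree u v → s v = σ v) ∧ y = x))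
    (h2 : 0 < M.pr (fun s y => s (M.parent u) = σ (M.parent u) ∧
            ∀ v : Fin n, M.inSubtree u v → y v = x v)) :
    M.cpr (fun s _ => ∀ v : Fin n, M.inSubtree u v → s v = σ v)
        (fun s y => (∀ v : Fin n, ¬ M.inSubtree u v → s v = σ v) ∧ y = x)
      = M.cpr (fun s _ => ∀ v : Fin n, M.inSubtree u v → s v = σ v)
          (fun s y => s (M.parent u) = σ (M.parent u) ∧
            ∀ v : Fin n, M.inSubtree u v → y v = x v) := by
  classical
  have hρ : ¬ M.inSubtree u (M.parent u) := M.not_inSubtree_parent hu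
  have h0 : ¬ M.inSubtree u 0 := fun h => (M.inSubtree_ne_zero hu h) rfl
  -- the numerator on the left-hand side is a single term
  have hNum1 : M.pr (fun s y => (∀ v : Fin n, M.inSubtree u v → s v = σ v) ∧
      ((∀ v : Fin n, ¬ M.inSubtree u v → s v = σ v) ∧ y = x)) = M.joint σ x := by
    unfold pr
    have hcond : ∀ (s : Fin n → Fin J) (y : Fin n → Fin V),
        ((∀ v : Fin n, M.inSubtree u v → s v = σ v) ∧
          (∀ v : Fin n, ¬ M.inSubtree u v → s v = σ v) ∧ y = x) ↔ (s = σ ∧ y = x) := by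
      intro s y
      constructor
      · rintro ⟨ha, hb, hc⟩
        refine ⟨funext fun v => ?_, hc⟩
        by_cases h : M.inSubtree u v
        · exact ha v h
        · exact hb v h
      · rintro ⟨rfl, rfl⟩
        exact ⟨fun _ _ => rfl, fun _ _ => rfl, rfl⟩
    simp only [hcond]
    have hinner : ∀ s : Fin n → Fin J,
        (∑ y : Fin n → Fin V, if s = σ ∧ y = x then M.joint s y else 0)
          = if s = σ then M.joint s x else 0 := by
      intro s; by_cases h : s = σ <;> simp [h]
    simp only [hinner]
    simp
  -- the denominator on the left-hand side collapses to a single observation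
  have hDen1 : M.pr (fun s y => (∀ v : Fin n, ¬ M.inSubtree u v → s v = σ v) ∧ y = x)
      = ∑ s : Fin n → Fin J,
          if (∀ v : Fin n, ¬ M.inSubtree u v → s v = σ v) then M.joint s x else 0 := by
    unfold pr
    refine Finset.sum_congr rfl fun s _ => ?_
    by_cases h : ∀ v : Fin n, ¬ M.inSubtree u v → s v = σ v
    · rw [if_pos h]
      have hy : ∀ y : Fin n → Fin V,
          ((∀ v : Fin n, ¬ M.inSubtree u v → s v = σ v) ∧ y = x) ↔ y = x :=
        fun y => and_iff_right h
      simp only [hy]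
      simp
    · rw [if_neg h]
      have hy : ∀ y : Fin n → Fin V,
          ((∀ v : Fin n, ¬ M.inSubtree u v → s v = σ v) ∧ y = x) ↔ False :=
        fun y => iff_false_intro (fun hc => h hc.1)
      simp only [hy]
      simp
  -- the cross-multiplication identity
  have key : M.joint σ x * M.pr (fun s y => s (M.parent u) = σ (M.parent u) ∧
        ∀ v : Fin n, M.inSubtree u v → y v = x v)
      = M.pr (fun s y => (∀ v : Fin n, M.inSubtree u v → s v = σ v) ∧
          s (M.parent u) = σ (M.parent u) ∧ ∀ v : Fin n, M.inSubtree u v → y v = x v)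
        * ∑ s : Fin n → Fin J,
            if (∀ v : Fin n, ¬ M.inSubtree u v → s v = σ v) then M.joint s x else 0 := by
    have e2 : M.pr (fun s y => s (M.parent u) = σ (M.parent u) ∧
          ∀ v : Fin n, M.inSubtree u v → y v = x v)
        = ∑ p ∈ Finset.univ.filter (fun p : (Fin n → Fin J) × (Fin n → Fin V) =>
            p.1 (M.parent u) = σ (M.parent u) ∧ ∀ v : Fin n, M.inSubtree u v → p.2 v = x v),
            M.joint p.1 p.2 := by
      unfold pr
      rw [← Fintype.sum_prod_type', Finset.sum_filter]
      refine Finset.sum_congr rfl fun p _ => ?_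
      by_cases h : p.1 (M.parent u) = σ (M.parent u) ∧
          ∀ v : Fin n, M.inSubtree u v → p.2 v = x v
      · rw [if_pos h, if_pos h]
      · rw [if_neg h, if_neg h]
    have e3 : M.pr (fun s y => (∀ v : Fin n, M.inSubtree u v → s v = σ v) ∧
          s (M.parent u) = σ (M.parent u) ∧ ∀ v : Fin n, M.inSubtree u v → y v = x v)
        = ∑ p ∈ Finset.univ.filter (fun p : (Fin n → Fin J) × (Fin n → Fin V) =>
            (∀ v : Fin n, M.inSubtree u v → p.1 v = σ v) ∧
            p.1 (M.parent u) = σ (M.parent u) ∧ ∀ v : Fin n, M.inSubtree u v → p.2 v = x v),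
            M.joint p.1 p.2 := by
      unfold pr
      rw [← Fintype.sum_prod_type', Finset.sum_filter]
      refine Finset.sum_congr rfl fun p _ => ?_
      by_cases h : (∀ v : Fin n, M.inSubtree u v → p.1 v = σ v) ∧
          p.1 (M.parent u) = σ (M.parent u) ∧ ∀ v : Fin n, M.inSubtree u v → p.2 v = x v
      · rw [if_pos h, if_pos h]
      · rw [if_neg h, if_neg h]
    have e4 : (∑ s : Fin n → Fin J,
          if (∀ v : Fin n, ¬ M.inSubtree u v → s v = σ v) then M.joint s x else 0)
        = ∑ s ∈ Finset.univ.filter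
            (fun s : Fin n → Fin J => ∀ v : Fin n, ¬ M.inSubtree u v → s v = σ v),
            M.joint s x := (Finset.sum_filter _ _).symm
    rw [e2, e3, e4, Finset.mul_sum, Finset.sum_mul_sum, ← Finset.sum_product']
    refine Finset.sum_nbij'
      (i := fun p => ((M.patchS u σ p.1, p.2), M.patchS u p.1 σ))
      (j := fun q => (M.patchS u q.2 q.1.1, q.1.2)) ?_ ?_ ?_ ?_ ?_
    · rintro ⟨s', y'⟩ hp
      simp only [Finset.mem_filter, Finset.mem_univ, true_and] at hp
      obtain ⟨hpar, hobs⟩ := hp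
      simp only [Finset.mem_product, Finset.mem_filter, Finset.mem_univ, true_and]
      refine ⟨⟨fun v hv => patchS_mem _ _ hv, ?_, hobs⟩, fun v hv => patchS_not_mem _ _ hv⟩
      rw [patchS_not_mem _ _ hρ]
      exact hpar
    · rintro ⟨⟨s'', y''⟩, s⟩ hq
      simp only [Finset.mem_product, Finset.mem_filter, Finset.mem_univ, true_and] at hq
      obtain ⟨⟨-, hpar, hobs⟩, -⟩ := hq
      simp only [Finset.mem_filter, Finset.mem_univ, true_and]
      refine ⟨?_, hobs⟩
      rw [patchS_not_mem _ _ hρ]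
      exact hpar
    · rintro ⟨s', y'⟩ hp
      rw [Finset.mem_filter] at hp
      dsimp only
      refine Prod.ext (funext fun v => ?_) rfl
      dsimp only
      by_cases h : M.inSubtree u v
      · rw [patchS_mem _ _ h, patchS_mem _ _ h]
      · rw [patchS_not_mem _ _ h, patchS_not_mem _ _ h]
    · rintro ⟨⟨s'', y''⟩, s⟩ hq
      simp only [Finset.mem_product, Finset.mem_filter, Finset.mem_univ, true_and] at hq
      obtain ⟨⟨hT, -, -⟩, hF⟩ := hq
      dsimp only at hT hF ⊢
      refine Prod.ext (Prod.ext (funext fun v => ?_) rfl) (funext fun v => ?_)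
      · dsimp only
        by_cases h : M.inSubtree u v
        · rw [patchS_mem _ _ h, (hT v h)]
        · rw [patchS_not_mem _ _ h, patchS_not_mem _ _ h]
      · dsimp only
        by_cases h : M.inSubtree u v
        · rw [patchS_mem _ _ h, patchS_mem _ _ h]
        · rw [patchS_not_mem _ _ h, (hF v h).symm]
    · rintro ⟨s', y'⟩ hp
      simp only [Finset.mem_filter, Finset.mem_univ, true_and] at hp
      obtain ⟨hpar, hobs⟩ := hp
      dsimp only
      have := M.joint_swap hu σ s' x y' hpar.symm (fun v hv => (hobs v hv).symm)
      rw [this]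
      ring
  -- conclude
  rw [cpr, cpr, if_pos h1, if_pos h2, div_eq_div_iff h1.ne' h2.ne', hNum1, hDen1]
  exact key
end

section
/- In a hidden Markov tree model, the partial state tree entropy at a vertex u can be computed from the conditional entropies of the children subtrees given the state at u, using only the observations within the subtree rooted at u: H(S̄_u | X = x) = Σ_j P(S_u = j | X = x) { H(S̄_{c(u)} | S_u = j, X̄_u = x̄_u) − log P(S_u = j | X = x) }, the sum ranging over the states j with P(S_u = j | X = x) > 0, and the inner entropy term read as 0 when u is a leaf; in particular H(S̄_{c(u)} | S_u = j, X = x) = H(S̄_{c(u)} | S_u = j, X̄_u = x̄_u). -/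
/-!
Grafting the subtree of `u` taken from one configuration `(s, y)` onto another one `(s', y')`
with the same state at `u`, and vice versa, is an involution on pairs of configurations which
preserves the product of their joint probabilities. Hence, given `S_u`, events inside the subtree
of `u` are independent of events outside it, so that conditioning on `X = x` may be replaced by
conditioning on `X̄_u = x̄_u`. The entropy formula is then the chain rule for the decomposition
`S̄_u ≅ (S_u, S̄_{c(u)})`.
-/

namespace HMTModel

open Finset Real

abbrev Event (J V n : ℕ) := (Fin n → Fin J) → (Fin n → Fin V) → Prop

variable {J V n : ℕ} [NeZero n] (M : HMTModel J V n)

section Probability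

variable {α β : Type*} {A B E F : Event J V n}

lemma joint_nonneg (s : Fin n → Fin J) (y : Fin n → Fin V) : 0 ≤ M.joint s y :=
  mul_nonneg (mul_nonneg (M.init_nonneg _) (prod_nonneg fun _ _ => M.trans_nonneg _ _))
    (prod_nonneg fun _ _ => M.emit_nonneg _ _)

lemma pr_nonneg (E : Event J V n) : 0 ≤ M.pr E :=
  sum_nonneg fun s _ => sum_nonneg fun y _ => by
    split_ifs
    exacts [M.joint_nonneg s y, le_rfl]

lemma pr_congr (h : ∀ s y, E s y ↔ F s y) : M.pr E = M.pr F := by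
  rw [show E = F from funext₂ fun s y => propext (h s y)]

lemma pr_mono (h : ∀ s y, E s y → F s y) : M.pr E ≤ M.pr F :=
  sum_le_sum fun s _ => sum_le_sum fun y _ => by
    by_cases hE : E s y
    · rw [if_pos hE, if_pos (h s y hE)]
    · rw [if_neg hE]
      split_ifs
      exacts [M.joint_nonneg s y, le_rfl]

lemma pr_eq_zero_of_forall_not (h : ∀ s y, ¬ E s y) : M.pr E = 0 := by
  simp [pr, h]

lemma pr_eq_zero_of_imp (hF : M.pr F = 0) (h : ∀ s y, E s y → F s y) : M.pr E = 0 :=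
  le_antisymm (hF ▸ M.pr_mono h) (M.pr_nonneg E)

lemma cpr_nonneg (A B : Event J V n) : 0 ≤ M.cpr A B := by
  unfold cpr
  split_ifs
  exacts [div_nonneg (M.pr_nonneg _) (M.pr_nonneg _), le_rfl]

lemma cpr_of_pos (A : Event J V n) (hB : 0 < M.pr B) :
    M.cpr A B = M.pr (fun s y => A s y ∧ B s y) / M.pr B :=
  if_pos hB

lemma cpr_eq_zero_of_pr_eq_zero (h : M.pr (fun s y => A s y ∧ B s y) = 0) : M.cpr A B = 0 := by
  rw [cpr, h, zero_div, ite_self]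

lemma pr_pos_of_cpr_pos (h : 0 < M.cpr A B) : 0 < M.pr (fun s y => A s y ∧ B s y) := by
  unfold cpr at h
  split_ifs at h with hB
  · exact (div_pos_iff_of_pos_right hB).1 h
  · exact absurd h (lt_irrefl 0)

lemma sum_pr_fiber [Fintype α] (f : (Fin n → Fin J) → α) (E : Event J V n) :
    ∑ a, M.pr (fun s y => f s = a ∧ E s y) = M.pr E := by
  classical
  unfold pr
  rw [sum_comm]
  refine sum_congr rfl fun s _ => ?_
  rw [sum_comm]
  refine sum_congr rfl fun y _ => ?_
  by_cases hE : E s y <;> simp [hE]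

lemma sum_cpr_fiber [Fintype α] (f : (Fin n → Fin J) → α) (hE : 0 < M.pr E) :
    ∑ a, M.cpr (fun s _ => f s = a) E = 1 := by
  simp only [M.cpr_of_pos _ hE]
  rw [← sum_div, M.sum_pr_fiber f E, div_self hE.ne']

lemma cpr_pair (f : (Fin n → Fin J) → α) (g : (Fin n → Fin J) → β) (E : Event J V n)
    (c : β) (b : α) :
    M.cpr (fun s _ => (g s, f s) = (c, b)) E
      = M.cpr (fun s _ => g s = c) E
        * M.cpr (fun s _ => f s = b) (fun s y => g s = c ∧ E s y) := by
  have hpair : M.pr (fun s y => (g s, f s) = (c, b) ∧ E s y)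
      = M.pr (fun s y => f s = b ∧ g s = c ∧ E s y) :=
    M.pr_congr fun s y => by rw [Prod.mk.injEq]; tauto
  by_cases hc : 0 < M.pr (fun s y => g s = c ∧ E s y)
  · have hE : 0 < M.pr E := hc.trans_le (M.pr_mono fun _ _ h => h.2)
    rw [M.cpr_of_pos _ hE, M.cpr_of_pos _ hE, M.cpr_of_pos _ hc, hpair]
    field_simp
  · have hc0 : M.pr (fun s y => g s = c ∧ E s y) = 0 :=
      le_antisymm (not_lt.1 hc) (M.pr_nonneg _)
    rw [M.cpr_eq_zero_of_pr_eq_zero (hpair.trans (M.pr_eq_zero_of_imp hc0 fun _ _ h => h.2)),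
      M.cpr_eq_zero_of_pr_eq_zero (M.pr_eq_zero_of_imp hc0 fun _ _ h => h.2), mul_zero]

open Classical in
lemma pr_mul_pr (E F : Event J V n) :
    M.pr E * M.pr F =
      ∑ p : ((Fin n → Fin J) × (Fin n → Fin V)) × ((Fin n → Fin J) × (Fin n → Fin V)),
        if E p.1.1 p.1.2 ∧ F p.2.1 p.2.2 then M.joint p.1.1 p.1.2 * M.joint p.2.1 p.2.2
        else 0 := by
  rw [pr, pr, ← Fintype.sum_prod_type' (f := fun s y => if E s y then M.joint s y else 0),
    ← Fintype.sum_prod_type' (f := fun s y => if F s y then M.joint s y else 0), sum_mul_sum,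
    ← Fintype.sum_prod_type']
  simp only [ite_zero_mul_ite_zero]

end Probability

section Entropy

variable {α β : Type*} [Fintype α] [Fintype β]

lemma condEnt_eq_sum_negMulLog (f : (Fin n → Fin J) → α) (E : Event J V n) :
    M.condEnt f E = ∑ a, negMulLog (M.cpr (fun s _ => f s = a) E) := by
  simp only [condEnt, negMulLog, neg_mul, sum_neg_distrib]

lemma condEnt_comp_of_injective (f : (Fin n → Fin J) → α) {e : α → β}
    (he : Function.Injective e) (E : Event J V n) :
    M.condEnt (fun s => e (f s)) E = M.condEnt f E := by
  simp only [condEnt_eq_sum_negMulLog]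
  refine (Fintype.sum_of_injective e he _ _ (fun b hb => ?_) fun a => ?_).symm
  · rw [M.cpr_eq_zero_of_pr_eq_zero
      (M.pr_eq_zero_of_forall_not fun s _ h => hb ⟨f s, h.1⟩), negMulLog_zero]
  · simp only [he.eq_iff]

lemma condEnt_const (c : α) (E : Event J V n) : M.condEnt (fun _ => c) E = 0 := by
  rw [condEnt_eq_sum_negMulLog]
  refine sum_eq_zero fun a _ => ?_
  by_cases hca : c = a
  · unfold cpr
    split_ifs with hE
    · rw [M.pr_congr (F := E) fun _ _ => and_iff_right hca, div_self hE.ne', negMulLog_one]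
    · exact negMulLog_zero
  · rw [M.cpr_eq_zero_of_pr_eq_zero (M.pr_eq_zero_of_forall_not fun _ _ h => hca h.1),
      negMulLog_zero]

lemma condEnt_prod (f : (Fin n → Fin J) → α) (g : (Fin n → Fin J) → β) (E : Event J V n) :
    M.condEnt (fun s => (g s, f s)) E = M.condEnt g E + M.condEntGiven f g E := by
  have hmass : ∀ c, (∑ b, M.cpr (fun s _ => f s = b) (fun s y => g s = c ∧ E s y)) *
      negMulLog (M.cpr (fun s _ => g s = c) E) = negMulLog (M.cpr (fun s _ => g s = c) E) := by
    intro c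
    by_cases hc : 0 < M.pr (fun s y => g s = c ∧ E s y)
    · rw [M.sum_cpr_fiber f hc, one_mul]
    · rw [M.cpr_eq_zero_of_pr_eq_zero (le_antisymm (not_lt.1 hc) (M.pr_nonneg _)),
        negMulLog_zero, mul_zero]
  simp only [condEnt_eq_sum_negMulLog, condEntGiven, Fintype.sum_prod_type, M.cpr_pair,
    negMulLog_mul, sum_add_distrib, ← sum_mul, ← mul_sum, hmass]

lemma condEnt_add_condEntGiven (f : (Fin n → Fin J) → α) (g : (Fin n → Fin J) → β)
    (E : Event J V n) :
    M.condEnt g E + M.condEntGiven f g E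
      = ∑ c ∈ univ.filter (fun c => 0 < M.cpr (fun s _ => g s = c) E),
          M.cpr (fun s _ => g s = c) E
            * (M.condEnt f (fun s y => g s = c ∧ E s y)
              - log (M.cpr (fun s _ => g s = c) E)) := by
  rw [sum_filter_of_ne fun c _ h => (M.cpr_nonneg _ _).lt_of_ne' (left_ne_zero_of_mul h),
    condEnt_eq_sum_negMulLog, condEntGiven, ← sum_add_distrib]
  refine sum_congr rfl fun c _ => ?_
  rw [negMulLog]
  ring

end Entropy

section Tree

variable (u : Fin n) {v : Fin n}

lemma inSubtree_self : M.inSubtree u u := Relation.ReflTransGen.refl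

lemma ne_zero_and_inSubtree_parent (h : M.inSubtree u v) (hvu : v ≠ u) :
    v ≠ 0 ∧ M.inSubtree u (M.parent v) := by
  rcases Relation.ReflTransGen.cases_head h with rfl | ⟨w, ⟨hv, rfl⟩, hw⟩
  · exact absurd rfl hvu
  · exact ⟨hv, hw⟩

lemma le_of_inSubtree (h : M.inSubtree u v) : u ≤ v := by
  induction h using Relation.ReflTransGen.head_induction_on with
  | refl => exact le_rfl
  | head hstep _ ih => exact ih.trans (hstep.2 ▸ M.parent_lt _ hstep.1).le

lemma not_inSubtree_parent_self (hu : u ≠ 0) : ¬ M.inSubtree u (M.parent u) :=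
  fun h => (M.le_of_inSubtree u h).not_gt (M.parent_lt u hu)

lemma not_inSubtree_parent_s19 (hv : v ≠ 0) (h : ¬ M.inSubtree u v) :
    ¬ M.inSubtree u (M.parent v) :=
  fun hp => h (Relation.ReflTransGen.head ⟨hv, rfl⟩ hp)

lemma eq_of_inSubtree_of_isLeaf (hleaf : ∀ w, w ≠ 0 → M.parent w ≠ u)
    (h : M.inSubtree u v) : v = u := by
  induction h using Relation.ReflTransGen.head_induction_on with
  | refl => rfl
  | head hstep _ ih => exact absurd (ih ▸ hstep.2) (hleaf _ hstep.1)

end Tree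

section Graft

variable (u : Fin n) {γ : Type*} {v : Fin n}

open Classical in
noncomputable def graft (a b : Fin n → γ) : Fin n → γ :=
  fun v => if M.inSubtree u v then a v else b v

lemma graft_of_inSubtree {a b : Fin n → γ} (h : M.inSubtree u v) : M.graft u a b v = a v :=
  if_pos h

lemma graft_of_not_inSubtree {a b : Fin n → γ} (h : ¬ M.inSubtree u v) :
    M.graft u a b v = b v :=
  if_neg h

lemma graft_graft (a b : Fin n → γ) : M.graft u (M.graft u a b) (M.graft u b a) = a := by
  funext v
  by_cases h : M.inSubtree u v
  · rw [M.graft_of_inSubtree u h, M.graft_of_inSubtree u h]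
  · rw [M.graft_of_not_inSubtree u h, M.graft_of_not_inSubtree u h]

open Classical in
lemma graft_eq_ite {a b : Fin n → γ} (hab : a u = b u) (v : Fin n) :
    M.graft u a b v = if M.inSubtree u v ∧ v ≠ u then a v else b v := by
  by_cases hvu : v = u
  · rw [if_neg fun h => h.2 hvu, hvu, M.graft_of_inSubtree u (M.inSubtree_self u), hab]
  · by_cases h : M.inSubtree u v
    · rw [if_pos ⟨h, hvu⟩, M.graft_of_inSubtree u h]
    · rw [if_neg fun h' => h h'.1, M.graft_of_not_inSubtree u h]

open Classical in
lemma graft_parent_eq_ite (a b : Fin n → γ) (hv : v ≠ 0) :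
    M.graft u a b (M.parent v)
      = if M.inSubtree u v ∧ v ≠ u then a (M.parent v) else b (M.parent v) := by
  by_cases hvu : v = u
  · subst hvu
    rw [if_neg fun h => h.2 rfl, M.graft_of_not_inSubtree v (M.not_inSubtree_parent_self v hv)]
  · by_cases h : M.inSubtree u v
    · rw [if_pos ⟨h, hvu⟩,
        M.graft_of_inSubtree u (M.ne_zero_and_inSubtree_parent u h hvu).2]
    · rw [if_neg fun h' => h h'.1, M.graft_of_not_inSubtree u (M.not_inSubtree_parent_s19 u hv h)]

/-- Every factor of the joint law involves a vertex and its parent only, and no such pair is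
split by the graft: `u` is the only vertex of the subtree whose parent lies outside it, and `s`
and `s'` agree there. -/
lemma joint_graft_mul {s s' : Fin n → Fin J} (y y' : Fin n → Fin V) (hs : s u = s' u) :
    M.joint (M.graft u s s') (M.graft u y y') * M.joint (M.graft u s' s) (M.graft u y' y)
      = M.joint s y * M.joint s' y' := by
  have hinit : M.init (M.graft u s s' 0) * M.init (M.graft u s' s 0)
      = M.init (s 0) * M.init (s' 0) := by
    unfold graft
    split_ifs <;> ring
  have htrans : ∀ v ∈ univ.filter (fun v : Fin n => v ≠ 0),
      M.trans (M.graft u s s' (M.parent v)) (M.graft u s s' v)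
          * M.trans (M.graft u s' s (M.parent v)) (M.graft u s' s v)
        = M.trans (s (M.parent v)) (s v) * M.trans (s' (M.parent v)) (s' v) := by
    intro v hv
    rw [M.graft_parent_eq_ite u _ _ (mem_filter.1 hv).2,
      M.graft_parent_eq_ite u _ _ (mem_filter.1 hv).2, M.graft_eq_ite u hs,
      M.graft_eq_ite u hs.symm]
    split_ifs <;> ring
  have hemit : ∀ v ∈ univ,
      M.emit (M.graft u s s' v) (M.graft u y y' v) * M.emit (M.graft u s' s v) (M.graft u y' y v)
        = M.emit (s v) (y v) * M.emit (s' v) (y' v) := by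
    intro v _
    unfold graft
    split_ifs <;> ring
  unfold joint
  calc _ = (M.init (M.graft u s s' 0) * M.init (M.graft u s' s 0))
        * (∏ v ∈ univ.filter (fun v : Fin n => v ≠ 0),
            M.trans (M.graft u s s' (M.parent v)) (M.graft u s s' v)
              * M.trans (M.graft u s' s (M.parent v)) (M.graft u s' s v))
        * ∏ v, M.emit (M.graft u s s' v) (M.graft u y y' v)
            * M.emit (M.graft u s' s v) (M.graft u y' y v) := by
        rw [prod_mul_distrib, prod_mul_distrib]
        ring
    _ = _ := by
        rw [hinit, prod_congr rfl htrans, prod_congr rfl hemit, prod_mul_distrib, prod_mul_distrib]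
        ring

end Graft

def EventDependsOn (D : Fin n → Prop) (P : Event J V n) : Prop :=
  ∀ s y s' y', (∀ v, D v → s v = s' v ∧ y v = y' v) → P s y → P s' y'

section ConditionalIndependence

variable (u : Fin n) {P P' Q Q' : Event J V n}

lemma EventDependsOn.graft_left (hP : EventDependsOn (M.inSubtree u) P)
    {s : Fin n → Fin J} {y : Fin n → Fin V} (s' : Fin n → Fin J) (y' : Fin n → Fin V)
    (h : P s y) : P (M.graft u s s') (M.graft u y y') :=
  hP s y _ _
    (fun _ hv => ⟨(M.graft_of_inSubtree u hv).symm, (M.graft_of_inSubtree u hv).symm⟩) h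

lemma EventDependsOn.graft_right (hQ : EventDependsOn (¬ M.inSubtree u ·) Q)
    (s : Fin n → Fin J) (y : Fin n → Fin V) {s' : Fin n → Fin J} {y' : Fin n → Fin V}
    (h : Q s' y') : Q (M.graft u s s') (M.graft u y y') :=
  hQ s' y' _ _
    (fun _ hv => ⟨(M.graft_of_not_inSubtree u hv).symm, (M.graft_of_not_inSubtree u hv).symm⟩) h

lemma graft_mem_swap (hP : EventDependsOn (M.inSubtree u) P)
    (hP' : EventDependsOn (M.inSubtree u) P') (hQ : EventDependsOn (¬ M.inSubtree u ·) Q)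
    (hQ' : EventDependsOn (¬ M.inSubtree u ·) Q') {j : Fin J}
    {s s' : Fin n → Fin J} {y y' : Fin n → Fin V}
    (h : s u = j ∧ P s y ∧ Q s y) (h' : s' u = j ∧ P' s' y' ∧ Q' s' y') :
    (M.graft u s s' u = j ∧ P (M.graft u s s') (M.graft u y y') ∧
        Q' (M.graft u s s') (M.graft u y y')) ∧
      (M.graft u s' s u = j ∧ P' (M.graft u s' s) (M.graft u y' y) ∧
        Q (M.graft u s' s) (M.graft u y' y)) := by
  rw [M.graft_of_inSubtree u (M.inSubtree_self u), M.graft_of_inSubtree u (M.inSubtree_self u)]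
  exact ⟨⟨h.1, hP.graft_left M u s' y' h.2.1, hQ'.graft_right M u s y h'.2.2⟩,
    ⟨h'.1, hP'.graft_left M u s y h'.2.1, hQ.graft_right M u s' y' h.2.2⟩⟩

/-- Conditional independence of the subtree of `u` and its complement given `S_u`, in
cross-multiplied form. -/
lemma pr_mul_pr_swap (hP : EventDependsOn (M.inSubtree u) P)
    (hP' : EventDependsOn (M.inSubtree u) P') (hQ : EventDependsOn (¬ M.inSubtree u ·) Q)
    (hQ' : EventDependsOn (¬ M.inSubtree u ·) Q') (j : Fin J) :
    M.pr (fun s y => s u = j ∧ P s y ∧ Q s y) * M.pr (fun s y => s u = j ∧ P' s y ∧ Q' s y)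
      = M.pr (fun s y => s u = j ∧ P s y ∧ Q' s y)
        * M.pr (fun s y => s u = j ∧ P' s y ∧ Q s y) := by
  let σ : ((Fin n → Fin J) × (Fin n → Fin V)) × ((Fin n → Fin J) × (Fin n → Fin V)) →
      ((Fin n → Fin J) × (Fin n → Fin V)) × ((Fin n → Fin J) × (Fin n → Fin V)) :=
    fun p => ((M.graft u p.1.1 p.2.1, M.graft u p.1.2 p.2.2),
      (M.graft u p.2.1 p.1.1, M.graft u p.2.2 p.1.2))
  have hσ : Function.Involutive σ := fun p => by simp only [σ, M.graft_graft]
  rw [M.pr_mul_pr, M.pr_mul_pr]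
  refine Fintype.sum_equiv hσ.toPerm _ _ fun ⟨⟨s, y⟩, s', y'⟩ => ?_
  by_cases hl : (s u = j ∧ P s y ∧ Q s y) ∧ (s' u = j ∧ P' s' y' ∧ Q' s' y')
  · rw [if_pos hl]
    exact (M.joint_graft_mul u y y' (hl.1.1.trans hl.2.1.symm)).symm.trans
      (if_pos (M.graft_mem_swap u hP hP' hQ hQ' hl.1 hl.2)).symm
  · rw [if_neg hl]
    refine (if_neg fun hr => hl ?_).symm
    simpa only [Function.Involutive.coe_toPerm, σ, M.graft_graft]
      using M.graft_mem_swap u hP hP' hQ' hQ hr.1 hr.2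

lemma cpr_obs_eq_cpr_obs_subtree {α : Type*} (f : (Fin n → Fin J) → α)
    (hf : ∀ s s', (∀ v, M.inSubtree u v → s v = s' v) → f s = f s') (a : α)
    (x : Fin n → Fin V) {j : Fin J} (h : 0 < M.pr (fun s y => s u = j ∧ y = x)) :
    M.cpr (fun s _ => f s = a) (fun s y => s u = j ∧ y = x)
      = M.cpr (fun s _ => f s = a)
          (fun s y => s u = j ∧ ∀ v, M.inSubtree u v → y v = x v) := by
  have h' : 0 < M.pr (fun s y => s u = j ∧ ∀ v, M.inSubtree u v → y v = x v) :=
    h.trans_le (M.pr_mono fun _ _ hy => ⟨hy.1, fun v _ => by rw [hy.2]⟩)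
  rw [M.cpr_of_pos _ h, M.cpr_of_pos _ h', div_eq_div_iff h.ne' h'.ne']
  have hsplit : ∀ y : Fin n → Fin V, y = x ↔
      (∀ v, M.inSubtree u v → y v = x v) ∧ ∀ v, ¬ M.inSubtree u v → y v = x v := fun y =>
    ⟨fun hy => ⟨fun v _ => hy ▸ rfl, fun v _ => hy ▸ rfl⟩,
      fun hy => funext fun v => (em (M.inSubtree u v)).elim (hy.1 v) (hy.2 v)⟩
  have hin : EventDependsOn (J := J) (M.inSubtree u)
      fun _ y => ∀ v, M.inSubtree u v → y v = x v :=
    fun _ _ _ _ hagree hy v hv => (hagree v hv).2.symm.trans (hy v hv)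
  have key := M.pr_mul_pr_swap u (P := fun s y => f s = a ∧ ∀ v, M.inSubtree u v → y v = x v)
    (P' := fun _ y => ∀ v, M.inSubtree u v → y v = x v)
    (Q := fun _ y => ∀ v, ¬ M.inSubtree u v → y v = x v) (Q' := fun _ _ => True)
    (fun s y s' y' hagree hy => ⟨(hf s s' fun v hv => (hagree v hv).1).symm.trans hy.1,
      hin s y s' y' hagree hy.2⟩) hin
    (fun _ _ _ _ hagree hy v hv => (hagree v hv).2.symm.trans (hy v hv))
    (fun _ _ _ _ _ h => h) j
  simp only [hsplit]
  convert key using 2 <;> exact M.pr_congr fun s y => by tauto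

lemma condEnt_obs_eq_condEnt_obs_subtree {α : Type*} [Fintype α] (f : (Fin n → Fin J) → α)
    (hf : ∀ s s', (∀ v, M.inSubtree u v → s v = s' v) → f s = f s')
    (x : Fin n → Fin V) {j : Fin J} (h : 0 < M.pr (fun s y => s u = j ∧ y = x)) :
    M.condEnt f (fun s y => s u = j ∧ y = x)
      = M.condEnt f (fun s y => s u = j ∧ ∀ v, M.inSubtree u v → y v = x v) := by
  simp only [condEnt_eq_sum_negMulLog, M.cpr_obs_eq_cpr_obs_subtree u f hf _ x h]

end ConditionalIndependence

section Subtree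

variable [NeZero J] (u : Fin n)

lemma condEnt_subVar (E : Event J V n) :
    M.condEnt (M.subVar u) E = M.condEnt (fun s => (s u, M.childSubVar u s)) E := by
  have he : Function.Injective fun a : Fin n → Fin J => (a u, Function.update a u 0) := by
    intro a b hab
    rw [Prod.mk.injEq] at hab
    rw [← Function.update_eq_self u a, ← Function.update_eq_self u b, ← Function.update_idem,
      hab.1, hab.2, Function.update_idem]
  rw [← M.condEnt_comp_of_injective (M.subVar u) he]
  congr 1
  funext s
  refine Prod.ext (if_pos (M.inSubtree_self u)) (funext fun v => ?_)
  dsimp only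
  by_cases hvu : v = u
  · rw [hvu, Function.update_self, childSubVar, if_neg fun h => h.2 rfl]
  · rw [Function.update_of_ne hvu]
    unfold subVar childSubVar
    by_cases h : M.inSubtree u v
    · rw [if_pos h, if_pos ⟨h, hvu⟩]
    · rw [if_neg h, if_neg fun h' => h h'.1]

lemma childSubVar_congr {s s' : Fin n → Fin J} (h : ∀ v, M.inSubtree u v → s v = s' v) :
    M.childSubVar u s = M.childSubVar u s' :=
  funext fun v => by
    unfold childSubVar
    split_ifs with hv
    exacts [h v hv.1, rfl]

lemma childSubVar_of_isLeaf (hleaf : ∀ w, w ≠ 0 → M.parent w ≠ u) :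
    M.childSubVar u = fun _ _ => 0 :=
  funext₂ fun _ _ => if_neg fun h => h.2 (M.eq_of_inSubtree_of_isLeaf u hleaf h.1)

end Subtree

end HMTModel

open HMTModel

theorem hmt_partial_entropy_from_upward_quantities_general
    {J V n : ℕ} [NeZero J] [NeZero n] (M : HMTModel J V n)
    (x : Fin n → Fin V)
    (u : Fin n) (ξ : Fin J → ℝ)
    (hξ : ∀ j, ξ j = M.cpr (fun s _ => s u = j) (obsEq x)) :
    (M.condEnt (M.subVar u) (obsEq x)
      = ∑ j ∈ Finset.univ.filter (fun j : Fin J => 0 < ξ j),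
          ξ j * ((if Finset.univ.filter (fun v : Fin n => v ≠ 0 ∧ M.parent v = u) = ∅
                  then 0
                  else M.condEnt (M.childSubVar u)
                      (fun s y => s u = j ∧ ∀ v : Fin n, M.inSubtree u v → y v = x v))
                 - Real.log (ξ j)))
    ∧ ∀ j : Fin J, 0 < ξ j →
        M.condEnt (M.childSubVar u) (fun s y => s u = j ∧ y = x)
          = M.condEnt (M.childSubVar u)
              (fun s y => s u = j ∧ ∀ v : Fin n, M.inSubtree u v → y v = x v) := by
  have hobs : ∀ j, 0 < ξ j →
      M.condEnt (M.childSubVar u) (fun s y => s u = j ∧ y = x)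
        = M.condEnt (M.childSubVar u)
            (fun s y => s u = j ∧ ∀ v : Fin n, M.inSubtree u v → y v = x v) :=
    fun j hj => M.condEnt_obs_eq_condEnt_obs_subtree u _ (fun _ _ => M.childSubVar_congr u) x
      (M.pr_pos_of_cpr_pos (hξ j ▸ hj))
  refine ⟨?_, hobs⟩
  rw [M.condEnt_subVar, M.condEnt_prod, M.condEnt_add_condEntGiven]
  simp only [hξ]
  refine Finset.sum_congr rfl fun j hj => ?_
  congr 2
  split_ifs with hleaf
  · rw [M.childSubVar_of_isLeaf u fun w hw hp =>
      Finset.filter_eq_empty_iff.1 hleaf (Finset.mem_univ w) ⟨hw, hp⟩, condEnt_const]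
  · exact hobs j (hξ j ▸ (Finset.mem_filter.1 hj).2)

/-- In a hidden Markov tree model, the partial state tree entropy
at a vertex `u` can be computed from the conditional entropies of the children
subtrees given the state at `u`, using only the observations within the subtree
rooted at `u`:
`H(S̄_u | X = x) = ∑_j P(S_u = j | X = x)
    { H(S̄_{c(u)} | S_u = j, X̄_u = x̄_u) − log P(S_u = j | X = x) }`,
the sum ranging over the states `j` with `P(S_u = j | X = x) > 0` and the inner
entropy term read as `0` when `u` is a leaf; in particular
`H(S̄_{c(u)} | S_u = j, X = x) = H(S̄_{c(u)} | S_u = j, X̄_u = x̄_u)`. -/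
theorem hmt_partial_entropy_from_upward_quantities
    {J V n : ℕ} [NeZero J] [NeZero n] (M : HMTModel J V n)
    (x : Fin n → Fin V) (hx : 0 < M.pr (obsEq x))
    (u : Fin n) (ξ : Fin J → ℝ)
    (hξ : ∀ j, ξ j = M.cpr (fun s _ => s u = j) (obsEq x)) :
    (M.condEnt (M.subVar u) (obsEq x)
      = ∑ j ∈ Finset.univ.filter (fun j : Fin J => 0 < ξ j),
          ξ j * ((if Finset.univ.filter (fun v : Fin n => v ≠ 0 ∧ M.parent v = u) = ∅
                  then 0
                  else M.condEnt (M.childSubVar u)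
                      (fun s y => s u = j ∧ ∀ v : Fin n, M.inSubtree u v → y v = x v))
                 - Real.log (ξ j)))
    ∧ ∀ j : Fin J, 0 < ξ j →
        M.condEnt (M.childSubVar u) (fun s y => s u = j ∧ y = x)
          = M.condEnt (M.childSubVar u)
              (fun s y => s u = j ∧ ∀ v : Fin n, M.inSubtree u v → y v = x v) :=
  hmt_partial_entropy_from_upward_quantities_general M x u ξ hξ
end
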